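/- If L_h ⊆ R is a lexsegment ideal whose quotient has Hilbert polynomial p (i.e., h(j) = p(j) for j ≫ 0, where h is the Hilbert function of R/L_h), then the saturation of L_h equals the saturated lexsegment ideal L_p associated to p. -/

import Mathlib

open MvPolynomial

noncomputable section

/-- The polynomial ring `K[x_0,…,x_n]` in `n+1` variables. -/
abbrev PR (K : Type*) [Field K] (n : ℕ) := MvPolynomial (Fin (n+1)) K

variable {K : Type*} [Field K] {n : ℕ}

/-- The monomial `x^A`. -/
def mon (A : Fin (n+1) →₀ ℕ) : PR K n := monomial A 1

/-- Total degree of the monomial with exponent vector `A`. -/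
def mdeg (A : Fin (n+1) →₀ ℕ) : ℕ := ∑ i, A i

/-- The largest index of a variable dividing `x^A` (0 if `A = 0`). -/
def maxIdx (A : Fin (n+1) →₀ ℕ) : Fin (n+1) := WithBot.unbotD 0 (A.support.max)

/-- The exponent vector of `(x_i / x_j) · x^A`. -/
def shiftM (A : Fin (n+1) →₀ ℕ) (i j : Fin (n+1)) : Fin (n+1) →₀ ℕ :=
  A + Finsupp.single i 1 - Finsupp.single j 1

/-- `I` is a monomial ideal: generated by a set of monomials. -/
def IsMonomialIdeal (I : Ideal (PR K n)) : Prop :=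
  ∃ S : Set (Fin (n+1) →₀ ℕ), I = Ideal.span ((fun A => (mon A : PR K n)) '' S)

/-- Strongly stable monomial ideal. -/
def StronglyStable (I : Ideal (PR K n)) : Prop :=
  ∀ A : Fin (n+1) →₀ ℕ, mon A ∈ I → ∀ i j : Fin (n+1), A j ≠ 0 → i < j →
    mon (shiftM A i j) ∈ I

/-- Stable monomial ideal. -/
def Stable (I : Ideal (PR K n)) : Prop :=
  ∀ A : Fin (n+1) →₀ ℕ, A ≠ 0 → mon A ∈ I → ∀ i : Fin (n+1), i < maxIdx A →
    mon (shiftM A i (maxIdx A)) ∈ I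

/-- `x^A` is a minimal monomial generator of `I`. -/
def MinGen (I : Ideal (PR K n)) (A : Fin (n+1) →₀ ℕ) : Prop :=
  mon A ∈ I ∧ ∀ B : Fin (n+1) →₀ ℕ, B ≤ A → B ≠ A → mon B ∉ I

/-- The set of exponent vectors of minimal monomial generators of `I`. -/
def Gens (I : Ideal (PR K n)) : Set (Fin (n+1) →₀ ℕ) := {A | MinGen I A}

/-- The irrelevant maximal ideal `(x_0,…,x_n)`. -/
def irrIdeal (K : Type*) [Field K] (n : ℕ) : Ideal (PR K n) :=
  Ideal.span (Set.range fun i : Fin (n+1) => (X i : PR K n))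

/-- `I` is saturated: `(I : (x_0,…,x_n)) = I`. -/
def Saturated (I : Ideal (PR K n)) : Prop :=
  Submodule.colon I (irrIdeal K n) = I

/-- The saturation `∪ₖ (I : (x_0,…,x_n)^k)`. -/
def saturationOf (I : Ideal (PR K n)) : Ideal (PR K n) :=
  ⨆ k : ℕ, Submodule.colon I (((irrIdeal K n) ^ k : Ideal (PR K n)) : Set (PR K n))

/-- The Hilbert function of `R/I`: `j ↦ dim_K [R/I]_j`. -/
def hilbF {σ : Type*} (I : Ideal (MvPolynomial σ K)) (j : ℕ) : ℕ :=
  Module.finrank K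
    ((homogeneousSubmodule σ K j).map (Ideal.Quotient.mkₐ K I).toLinearMap)

/-- `p` is the Hilbert polynomial of `R/I`. -/
def IsHilbPoly {σ : Type*} (I : Ideal (MvPolynomial σ K)) (p : Polynomial ℚ) : Prop :=
  ∃ N : ℕ, ∀ j : ℕ, N ≤ j → p.eval (j : ℚ) = (hilbF I j : ℚ)

/-- The binomial-coefficient polynomial `C(q, k) = q(q-1)⋯(q-k+1)/k!`. -/
def choosePoly (q : Polynomial ℚ) (k : ℕ) : Polynomial ℚ :=
  ((k.factorial : ℚ))⁻¹ • ∏ j ∈ Finset.range k, (q - Polynomial.C (j : ℚ))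

/-- The canonical representation `p(z) = Σ_{i=0}^d [C(z+i,i+1) − C(z+i−b_i,i+1)]`. -/
def canonicalHP (d : ℕ) (b : ℕ → ℕ) : Polynomial ℚ :=
  ∑ i ∈ Finset.range (d+1),
    (choosePoly (Polynomial.X + Polynomial.C (i : ℚ)) (i+1)
      - choosePoly (Polynomial.X + Polynomial.C (i : ℚ) - Polynomial.C (b i : ℚ)) (i+1))

/-- `x^A >_lex x^B`. -/
def LexGt (A B : Fin (n+1) →₀ ℕ) : Prop :=
  ∃ i : Fin (n+1), (∀ j : Fin (n+1), j < i → A j = B j) ∧ B i < A i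

/-- `I` is a lexsegment ideal. -/
def IsLexsegment (I : Ideal (PR K n)) : Prop :=
  IsMonomialIdeal I ∧ ∀ A B : Fin (n+1) →₀ ℕ, mdeg A = mdeg B → mon B ∈ I →
    LexGt A B → mon A ∈ I

/-- `I` is a homogeneous ideal. -/
def Homog (I : Ideal (PR K n)) : Prop :=
  ∀ f ∈ I, ∀ j : ℕ, homogeneousComponent j f ∈ I

/-- The set of right-shifts of `x^A`. -/
def rightShifts (A : Fin (n+1) →₀ ℕ) : Set (Fin (n+1) →₀ ℕ) :=
  {B | ∃ i : Fin (n+1), (i : ℕ) + 2 ≤ n ∧ A i ≠ 0 ∧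
    B = shiftM A (Fin.ofNat (n+1) ((i : ℕ) + 1 : ℕ)) i}

/-- The set of left-shifts of `x^A`. -/
def leftShifts (A : Fin (n+1) →₀ ℕ) : Set (Fin (n+1) →₀ ℕ) :=
  {B | ∃ i : Fin (n+1), 1 ≤ (i : ℕ) ∧ (i : ℕ) + 1 ≤ n ∧ A i ≠ 0 ∧
    B = shiftM A (Fin.ofNat (n+1) ((i : ℕ) - 1 : ℕ)) i}

/-- The monomials `x^A x_r, …, x^A x_{n-1}` with `r = max(x^A)`. -/
def expSet (A : Fin (n+1) →₀ ℕ) : Set (Fin (n+1) →₀ ℕ) :=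
  {B | ∃ j : Fin (n+1), ((maxIdx A : ℕ)) ≤ (j : ℕ) ∧ (j : ℕ) + 1 ≤ n ∧
    B = A + Finsupp.single j 1}

/-- `x^A ≠ 1` is expandable in `I`. -/
def Expandable (I : Ideal (PR K n)) (A : Fin (n+1) →₀ ℕ) : Prop :=
  A ≠ 0 ∧ MinGen I A ∧ ∀ B ∈ rightShifts A, ¬ MinGen I B

/-- `x^A ≠ 1` is contractible in `I`. -/
def Contractible (I : Ideal (PR K n)) (A : Fin (n+1) →₀ ℕ) : Prop :=
  A ≠ 0 ∧ mon A ∉ I ∧ MinGen I (A + Finsupp.single (Fin.ofNat (n+1) (n - 1 : ℕ)) 1) ∧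
    ∀ B ∈ leftShifts A, mon B ∈ I

/-- The expansion of `x^A` in `I`. -/
def expansionIdeal (I : Ideal (PR K n)) (A : Fin (n+1) →₀ ℕ) : Ideal (PR K n) :=
  Ideal.span ((fun B => (mon B : PR K n)) '' ((Gens I \ {A}) ∪ expSet A))

/-- The contraction of `x^A` in `I`. -/
def contractionIdeal (I : Ideal (PR K n)) (A : Fin (n+1) →₀ ℕ) : Ideal (PR K n) :=
  Ideal.span ((fun B => (mon B : PR K n)) '' ((Gens I ∪ {A}) \ expSet A))

/-- Setting `x_{n-1} = x_n = 1` in the exponent vector `A`. -/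
def stripLastTwo (A : Fin (n+1) →₀ ℕ) : Fin (n+1) →₀ ℕ :=
  Finsupp.update (Finsupp.update A (Fin.ofNat (n+1) (n : ℕ)) 0) (Fin.ofNat (n+1) (n - 1 : ℕ)) 0

/-- The double saturation `sat_{x_{n-1},x_n}(I)` (as an ideal of `R`). -/
def doubleSat (I : Ideal (PR K n)) : Ideal (PR K n) :=
  Ideal.span ((fun A => (mon (stripLastTwo A) : PR K n)) '' Gens I)

/-- Restriction of an exponent vector to the first `n` variables. -/
def restrictExp (A : Fin (n+1) →₀ ℕ) : Fin n →₀ ℕ :=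
  Finsupp.comapDomain Fin.castSucc A (Fin.castSucc_injective n).injOn

/-- The ideal `I · R^{(1)}` in `K[x_0,…,x_{n-1}]` (for saturated monomial `I`). -/
def restrictIdeal (I : Ideal (PR K n)) : Ideal (MvPolynomial (Fin n) K) :=
  Ideal.span ((fun A => (monomial (restrictExp A) (1 : K) : MvPolynomial (Fin n) K)) '' Gens I)

/-- Lex order on exponent vectors in `n` variables. -/
def LexGt' (A B : Fin n →₀ ℕ) : Prop :=
  ∃ i : Fin n, (∀ j : Fin n, j < i → A j = B j) ∧ B i < A i

/-- Monomial ideal in `K[x_0,…,x_{n-1}]`. -/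
def IsMonomialIdeal' (I : Ideal (MvPolynomial (Fin n) K)) : Prop :=
  ∃ S : Set (Fin n →₀ ℕ),
    I = Ideal.span ((fun A => (monomial A (1 : K) : MvPolynomial (Fin n) K)) '' S)

/-- Lexsegment ideal in `K[x_0,…,x_{n-1}]`. -/
def IsLexsegment' (I : Ideal (MvPolynomial (Fin n) K)) : Prop :=
  IsMonomialIdeal' I ∧ ∀ A B : Fin n →₀ ℕ, (∑ i, A i) = (∑ i, B i) →
    monomial B (1 : K) ∈ I → LexGt' A B → monomial A (1 : K) ∈ I

/-- `I` is almost lexsegment: saturated strongly stable with `I·R^{(1)}` lexsegment. -/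
def AlmostLex (I : Ideal (PR K n)) : Prop :=
  IsMonomialIdeal I ∧ StronglyStable I ∧ Saturated I ∧ IsLexsegment' (restrictIdeal I)

/-- A graded free resolution of the ideal `I`, with `rank i` the rank of the `i`-th
free module and `twist i k` the degrees of the standard basis elements. -/
structure GradedFreeRes (I : Ideal (PR K n)) where
  rank : ℕ → ℕ
  twist : (i : ℕ) → Fin (rank i) → ℕ
  diff : (i : ℕ) → ((Fin (rank (i+1)) → PR K n) →ₗ[PR K n] (Fin (rank i) → PR K n))
  aug : (Fin (rank 0) → PR K n) →ₗ[PR K n] PR K n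
  aug_range : LinearMap.range aug = I
  aug_graded : ∀ k, aug (Pi.single k 1) ∈ homogeneousSubmodule (Fin (n+1)) K (twist 0 k)
  diff_graded : ∀ i k l, diff i (Pi.single k 1) l = 0 ∨
    (twist i l ≤ twist (i+1) k ∧
      diff i (Pi.single k 1) l ∈ homogeneousSubmodule (Fin (n+1)) K (twist (i+1) k - twist i l))
  exact_aug : LinearMap.range (diff 0) = LinearMap.ker aug
  exact_diff : ∀ i, LinearMap.range (diff (i+1)) = LinearMap.ker (diff i)

/-- A resolution is minimal if all differential entries lie in the irrelevant ideal. -/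
def MinimalRes {I : Ideal (PR K n)} (F : GradedFreeRes I) : Prop :=
  ∀ i k l, constantCoeff (F.diff i (Pi.single k 1) l) = 0

end

/-!
In each degree the monomials of a lexsegment ideal form an initial segment of the lex order, and
their number is determined by the Hilbert function; so `L_h` and `L_p` contain the same monomials
in every degree `j ≫ 0`. The saturation of an ideal depends only on its components of large degree,
hence `L_h` and `L_p` have the same saturation, which is `L_p` itself since `L_p` is saturated.
-/

section

variable {K : Type*} [Field K] {n : ℕ} {I J : Ideal (PR K n)}

lemma mdeg_eq_degree (A : Fin (n+1) →₀ ℕ) : mdeg A = A.degree :=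
  (Finsupp.degree_eq_sum A).symm

lemma mem_irrIdeal_pow_iff {k : ℕ} {f : PR K n} :
    f ∈ irrIdeal K n ^ k ↔ ∀ A ∈ f.support, k ≤ mdeg A := by
  simp only [mdeg_eq_degree]
  exact mem_pow_idealOfVars_iff k f

lemma mem_saturationOf_iff {f : PR K n} :
    f ∈ saturationOf I ↔ ∃ k : ℕ, f ∈ I.colon (irrIdeal K n ^ k : Ideal (PR K n)) :=
  Submodule.mem_iSup_of_directed _ <| Monotone.directed_le fun _ _ hkl =>
    Submodule.colon_mono le_rfl (Ideal.pow_le_pow_right hkl)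

lemma saturationOf_le_saturationOf {N : ℕ} (h : I ⊓ irrIdeal K n ^ N ≤ J) :
    saturationOf I ≤ saturationOf J := by
  intro f hf
  obtain ⟨k, hk⟩ := mem_saturationOf_iff.1 hf
  refine mem_saturationOf_iff.2 ⟨k + N, Submodule.mem_colon.2 fun q hq => h ⟨?_, ?_⟩⟩
  · exact Submodule.mem_colon.1 hk q (Ideal.pow_le_pow_right (Nat.le_add_right k N) hq)
  · exact Ideal.mul_mem_left _ f (Ideal.pow_le_pow_right (Nat.le_add_left N k) hq)

lemma Saturated.colon_irrIdeal_pow (hI : Saturated I) (k : ℕ) :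
    I.colon (irrIdeal K n ^ k : Ideal (PR K n)) = I := by
  induction k with
  | zero => simp
  | succ k ih =>
    refine le_antisymm (fun f hf => ?_) Ideal.le_colon
    rw [← ih]
    refine Submodule.mem_colon.2 fun q hq => ?_
    rw [← hI]
    refine Submodule.mem_colon.2 fun r hr => ?_
    rw [smul_eq_mul, smul_eq_mul, mul_assoc]
    exact Submodule.mem_colon.1 hf _ (pow_succ (irrIdeal K n) k ▸ Ideal.mul_mem_mul hq hr)

lemma Saturated.saturationOf_eq (hI : Saturated I) : saturationOf I = I := by
  simp only [saturationOf, hI.colon_irrIdeal_pow, iSup_const]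

lemma IsMonomialIdeal.mem_iff (hI : IsMonomialIdeal I) {f : PR K n} :
    f ∈ I ↔ ∀ A ∈ f.support, (mon A : PR K n) ∈ I := by
  classical
  obtain ⟨S, rfl⟩ := hI
  simp only [mon, mem_ideal_span_monomial_image, support_monomial, one_ne_zero, if_false,
    Finset.mem_singleton, forall_eq]

lemma IsMonomialIdeal.inf_irrIdeal_pow_le (hI : IsMonomialIdeal I) (hJ : IsMonomialIdeal J)
    {N : ℕ} (h : ∀ A, N ≤ mdeg A → (mon A : PR K n) ∈ I → mon A ∈ J) :
    I ⊓ irrIdeal K n ^ N ≤ J := by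
  rintro f ⟨hfI, hfN⟩
  exact hJ.mem_iff.2 fun A hA => h A (mem_irrIdeal_pow_iff.1 hfN A hA) (hI.mem_iff.1 hfI A hA)

def stdMonomials (I : Ideal (PR K n)) (j : ℕ) : Set (Fin (n+1) →₀ ℕ) :=
  {A | mdeg A = j ∧ (mon A : PR K n) ∉ I}

lemma map_mk_restrictSupport (I : Ideal (PR K n)) (s : Set (Fin (n+1) →₀ ℕ)) :
    (restrictSupport K s).map (Ideal.Quotient.mkₐ K I).toLinearMap =
      (restrictSupport K {A | A ∈ s ∧ (mon A : PR K n) ∉ I}).map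
        (Ideal.Quotient.mkₐ K I).toLinearMap := by
  simp only [restrictSupport_eq_span, Submodule.map_span]
  refine le_antisymm (Submodule.span_le.2 ?_)
    (Submodule.span_mono (Set.image_mono (Set.image_mono fun A hA => hA.1)))
  rintro _ ⟨_, ⟨A, hA, rfl⟩, rfl⟩
  by_cases hAI : (mon A : PR K n) ∈ I
  · have hA0 : (Ideal.Quotient.mkₐ K I).toLinearMap (mon A) = 0 :=
      Ideal.Quotient.eq_zero_iff_mem.2 hAI
    exact hA0 ▸ Submodule.zero_mem _
  · exact Submodule.subset_span ⟨_, ⟨A, ⟨hA, hAI⟩, rfl⟩, rfl⟩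

lemma IsMonomialIdeal.injective_mk_restrictSupport (hI : IsMonomialIdeal I)
    {s : Set (Fin (n+1) →₀ ℕ)} (hs : ∀ A ∈ s, (mon A : PR K n) ∉ I) :
    Function.Injective ((Ideal.Quotient.mkₐ K I).toLinearMap ∘ₗ (restrictSupport K s).subtype) := by
  refine (injective_iff_map_eq_zero _).2 fun ⟨f, hf⟩ hf0 => Subtype.ext ?_
  have hfI : f ∈ I := Ideal.Quotient.eq_zero_iff_mem.1 hf0
  rw [Submodule.coe_zero, ← support_eq_empty, Finset.eq_empty_iff_forall_notMem]
  exact fun A hA => hs A (hf hA) (hI.mem_iff.1 hfI A hA)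

lemma IsMonomialIdeal.hilbF_eq_ncard (hI : IsMonomialIdeal I) (j : ℕ) :
    hilbF I j = (stdMonomials I j).ncard := by
  have hstd : stdMonomials I j = {A | A ∈ {d | d.degree = j} ∧ (mon A : PR K n) ∉ I} := by
    simp only [stdMonomials, mdeg_eq_degree, Set.mem_ofPred_eq]
  have hinj := hI.injective_mk_restrictSupport (s := stdMonomials I j) fun A hA => hA.2
  have hhom : homogeneousSubmodule (Fin (n+1)) K j = restrictSupport K {d | d.degree = j} :=
    homogeneousSubmodule_eq_finsupp_supported _ _ j
  rw [hilbF, hhom]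
  calc Module.finrank K ((restrictSupport K {d | d.degree = j}).map _)
      = Module.finrank K ((restrictSupport K (stdMonomials I j)).map
          (Ideal.Quotient.mkₐ K I).toLinearMap) := by
        rw [map_mk_restrictSupport, hstd]
    _ = Module.finrank K (restrictSupport K (stdMonomials I j)) := by
        rw [← LinearMap.finrank_range_of_inj hinj, LinearMap.range_comp, Submodule.range_subtype]
    _ = (stdMonomials I j).ncard := by
        rw [Module.finrank_eq_nat_card_basis (basisRestrictSupport K _), Nat.card_coe_set_eq]

lemma stdMonomials_finite (I : Ideal (PR K n)) (j : ℕ) : (stdMonomials I j).Finite :=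
  (Finsupp.finite_of_degree_eq j).subset fun A hA => (mdeg_eq_degree A).symm.trans hA.1

lemma lexGt_iff_toLex_lt {A B : Fin (n+1) →₀ ℕ} : LexGt A B ↔ toLex B < toLex A := by
  simp only [LexGt, Finsupp.Lex.lt_iff, eq_comm]
  rfl

lemma IsLexsegment.stdMonomials_subset_or (hI : IsLexsegment I) (hJ : IsLexsegment J) (j : ℕ) :
    stdMonomials I j ⊆ stdMonomials J j ∨ stdMonomials J j ⊆ stdMonomials I j := by
  by_contra! h
  obtain ⟨⟨A, ⟨hA, hAI⟩, hAJ⟩, ⟨B, ⟨hB, hBJ⟩, hBI⟩⟩ := And.imp Set.not_subset.1 Set.not_subset.1 h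
  simp only [stdMonomials, Set.mem_ofPred_eq, hA, hB, true_and, not_not] at hAJ hBI
  rcases lt_trichotomy (toLex A) (toLex B) with hAB | hAB | hAB
  · exact hBJ (hJ.2 B A (hB.trans hA.symm) hAJ (lexGt_iff_toLex_lt.2 hAB))
  · exact hAI (toLex.injective hAB ▸ hBI)
  · exact hAI (hI.2 A B (hA.trans hB.symm) hBI (lexGt_iff_toLex_lt.2 hAB))

lemma IsLexsegment.stdMonomials_eq_of_hilbF_eq (hI : IsLexsegment I) (hJ : IsLexsegment J)
    {j : ℕ} (h : hilbF I j = hilbF J j) : stdMonomials I j = stdMonomials J j := by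
  rw [hI.1.hilbF_eq_ncard, hJ.1.hilbF_eq_ncard] at h
  rcases hI.stdMonomials_subset_or hJ j with hIJ | hJI
  · exact Set.eq_of_subset_of_ncard_le hIJ h.ge (stdMonomials_finite J j)
  · exact (Set.eq_of_subset_of_ncard_le hJI h.le (stdMonomials_finite I j)).symm

lemma IsLexsegment.mon_mem_iff_of_hilbF_eq (hI : IsLexsegment I) (hJ : IsLexsegment J)
    {A : Fin (n+1) →₀ ℕ} (h : hilbF I (mdeg A) = hilbF J (mdeg A)) :
    (mon A : PR K n) ∈ I ↔ mon A ∈ J := by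
  have hstd := congrArg (A ∈ ·) (hI.stdMonomials_eq_of_hilbF_eq hJ h)
  simpa [stdMonomials, not_iff_not] using hstd

end

/-- the saturation of a lexsegment ideal with Hilbert polynomial `p`
is the saturated lexsegment ideal `L_p`. -/
theorem saturation_of_lexsegment_eq_lexIdeal
    {K : Type*} [Field K] {n : ℕ} (p : Polynomial ℚ)
    (Lh : Ideal (PR K n)) (hLh : IsLexsegment Lh) (hLhp : IsHilbPoly Lh p)
    (Lp : Ideal (PR K n)) (hLp1 : IsLexsegment Lp) (hLp2 : Saturated Lp)
    (hLp3 : IsHilbPoly Lp p) :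
    saturationOf Lh = Lp := by
  obtain ⟨N₁, hN₁⟩ := hLhp
  obtain ⟨N₂, hN₂⟩ := hLp3
  have hagree : ∀ A, max N₁ N₂ ≤ mdeg A → ((mon A : PR K n) ∈ Lh ↔ mon A ∈ Lp) := by
    refine fun A hA => hLh.mon_mem_iff_of_hilbF_eq hLp1 ?_
    exact_mod_cast (hN₁ _ (le_of_max_le_left hA)).symm.trans (hN₂ _ (le_of_max_le_right hA))
  apply le_antisymm
  · calc saturationOf Lh ≤ saturationOf Lp := saturationOf_le_saturationOf <|
          hLh.1.inf_irrIdeal_pow_le hLp1.1 fun A hA => (hagree A hA).1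
      _ = Lp := hLp2.saturationOf_eq
  · calc Lp = saturationOf Lp := hLp2.saturationOf_eq.symm
      _ ≤ saturationOf Lh := saturationOf_le_saturationOf <|
          hLp1.1.inf_irrIdeal_pow_le hLh.1 fun A hA => (hagree A hA).2
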